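/- arXiv:1304.5961 — 3 statements merged into one kernel-verified Lean document; each statement's English description precedes it below -/
import Mathlib

section
/- Let P = ⟨V,H,M,T⟩ be an abduction instance, let S ⊆ H, and let B ⊆ V be any set of variables. Then S is a solution to P if and only if (i) there exists an assignment τ ∈ 2^{B,S} such that T[τ] ∪ S is consistent, and (ii) for every assignment τ ∈ 2^{B,S}, T[τ] ∪ S ⊨ M[τ]. -/
/-- Propositional variables. -/
abbrev Var := ℕ

/-- A literal: a variable together with a polarity (`true` = positive). -/
abbrev Lit := Var × Bool

/-- A clause is a finite set of literals. -/
abbrev Clause := Finset Lit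

/-- A CNF formula is a finite set of clauses. -/
abbrev CNF := Finset Clause

/-- A partial truth assignment: a finite domain together with a valuation. -/
structure PAssign where
  dom : Finset Var
  val : Var → Bool

/-- Value of a literal under an assignment. -/
def litVal (τ : PAssign) (l : Lit) : Bool := if l.2 then τ.val l.1 else !(τ.val l.1)

/-- A clause is tautological if it contains a variable and its negation. -/
def Tautological (C : Clause) : Prop := ∃ x : Var, (x, true) ∈ C ∧ (x, false) ∈ C

/-- An assignment satisfies a clause: tautological clauses are satisfied by every
assignment; a non-tautological clause is satisfied if some literal (whose variable is
in the domain) is set to 1. -/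
def SatClause (τ : PAssign) (C : Clause) : Prop :=
  Tautological C ∨ ∃ l ∈ C, l.1 ∈ τ.dom ∧ litVal τ l = true

/-- An assignment satisfies a CNF formula if it satisfies every clause. -/
def Satisfies (τ : PAssign) (φ : CNF) : Prop := ∀ C ∈ φ, SatClause τ C

/-- A CNF formula is consistent (satisfiable) if some assignment satisfies it. -/
def Consistent (φ : CNF) : Prop := ∃ τ : PAssign, Satisfies τ φ

/-- Variables of a clause. -/
def clauseVars (C : Clause) : Finset Var := C.image Prod.fst

/-- Variables of a CNF formula. -/
def cnfVars (φ : CNF) : Finset Var := φ.biUnion clauseVars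

/-- A model of φ is a satisfying assignment whose domain contains var(φ). -/
def IsModel (τ : PAssign) (φ : CNF) : Prop := Satisfies τ φ ∧ cnfVars φ ⊆ τ.dom

/-- φ entails ψ if every model of φ whose domain contains var(ψ) is a model of ψ. -/
def Entails (φ ψ : CNF) : Prop :=
  ∀ τ : PAssign, IsModel τ φ → cnfVars ψ ⊆ τ.dom → IsModel τ ψ

open Classical in
/-- The truth assignment reduct φ[τ]: delete all clauses satisfied by τ and delete from
the remaining clauses all literals set to 0 by τ. -/
noncomputable def reduct (φ : CNF) (τ : PAssign) : CNF :=
  (φ.filter (fun C => ¬ SatClause τ C)).image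
    (fun C => C.filter (fun l => ¬ (l.1 ∈ τ.dom ∧ litVal τ l = false)))

/-- τ ∈ 2^{B,S}: τ has domain B and sets every s ∈ S ∩ B to 1. -/
def InTA (τ : PAssign) (B S : Finset Var) : Prop :=
  τ.dom = B ∧ ∀ s ∈ S, s ∈ B → τ.val s = true

/-- A finite set of variables used as a CNF formula: the set of positive unit clauses. -/
def unitCNF (X : Finset Var) : CNF := X.image (fun x => ({(x, true)} : Clause))

/-- An abduction instance ⟨V,H,M,T⟩. -/
structure AbdInst where
  V : Finset Var
  H : Finset Var
  M : Finset Var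
  T : CNF
  hH : H ⊆ V
  hM : M ⊆ V
  hHM : Disjoint H M
  hT : cnfVars T ⊆ V

/-- S ⊆ H is a solution to ⟨V,H,M,T⟩ if T ∪ S is consistent and T ∪ S ⊨ M. -/
def Solution (P : AbdInst) (S : Finset Var) : Prop :=
  S ⊆ P.H ∧ Consistent (P.T ∪ unitCNF S) ∧ Entails (P.T ∪ unitCNF S) (unitCNF P.M)

/-- A solution is subset-minimal if no proper subset is a solution. -/
def MinimalSolution (P : AbdInst) (S : Finset Var) : Prop :=
  Solution P S ∧ ∀ S' : Finset Var, S' ⊂ S → ¬ Solution P S'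

/-- Horn formulas: at most one positive literal per clause. -/
def IsHorn (φ : CNF) : Prop := ∀ C ∈ φ, (C.filter (fun l => l.2 = true)).card ≤ 1

/-- Krom formulas: at most two literals per clause. -/
def IsKrom (φ : CNF) : Prop := ∀ C ∈ φ, C.card ≤ 2

/-- B is a strong backdoor set of φ into the class `cls` if φ[τ] ∈ cls for every
assignment τ with domain B. -/
def StrongBackdoor (cls : CNF → Prop) (φ : CNF) (B : Finset Var) : Prop :=
  ∀ τ : PAssign, τ.dom = B → cls (reduct φ τ)

/-- The total assignment over V setting exactly the variables of U to 1. -/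
def assignOf (V U : Finset Var) : PAssign := ⟨V, fun x => decide (x ∈ U)⟩

/-- U (⊆ V, viewed as a total assignment over V) is the least model of φ over V. -/
def IsLeastModel (φ : CNF) (V U : Finset Var) : Prop :=
  U ⊆ V ∧ Satisfies (assignOf V U) φ ∧
    ∀ U' ⊆ V, Satisfies (assignOf V U') φ → U ⊆ U'

/-- Membership in Res(φ): the closure of φ under resolution, dropping tautological
clauses. -/
inductive ResMem (φ : CNF) : Clause → Prop
  | base {C : Clause} : C ∈ φ → ¬ Tautological C → ResMem φ C
  | resolve {C D : Clause} {x : Var} :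
      ResMem φ (insert (x, true) C) → ResMem φ (insert (x, false) D) →
      ¬ Tautological (C ∪ D) → ResMem φ (C ∪ D)

/-- Membership in TrimRes(T,H,M): clauses of Res(T) over variables in H ∪ M; if the
empty clause is derivable then TrimRes(T,H,M) = {□}. -/
def InTrimRes (T : CNF) (H M : Finset Var) (C : Clause) : Prop :=
  (ResMem T (∅ : Clause) ∧ C = ∅) ∨
    (¬ ResMem T (∅ : Clause) ∧ ResMem T C ∧ ∀ l ∈ C, l.1 ∈ H ∪ M)

/-- A Horn clause is definite if it has exactly one positive literal. -/
def IsDefinite (C : Clause) : Prop := (C.filter (fun l => l.2 = true)).card = 1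

/-- A clause is purely negative (a constraint) if it has no positive literal. -/
def PurelyNegative (C : Clause) : Prop := ∀ l ∈ C, l.2 = false

/-- Heads of a clause: variables occurring positively. -/
def headSet (C : Clause) : Finset Var := (C.filter (fun l => l.2 = true)).image Prod.fst

/-- Body of a clause: variables occurring negatively. -/
def bodySet (C : Clause) : Finset Var := (C.filter (fun l => l.2 = false)).image Prod.fst

/-- One step of the least-model computation for definite clauses:
U ↦ U ∪ {head(C) : C ∈ D, body(C) ⊆ U}. -/
def hornStep (D : CNF) (U : Finset Var) : Finset Var :=
  U ∪ D.biUnion (fun C => if bodySet C ⊆ U then headSet C else ∅)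

/-- Size of a CNF formula. -/
def cnfSize (F : CNF) : ℕ := ∑ C ∈ F, (C.card + 1)

/-- Size of an abduction instance. -/
def instSize (P : AbdInst) : ℕ := P.V.card + P.H.card + P.M.card + ∑ C ∈ P.T, C.card

section Helpers

lemma litVal_congr {σ μ : PAssign} {l : Lit} (h : μ.val l.1 = σ.val l.1) :
    litVal μ l = litVal σ l := by simp [litVal, h]

lemma satClause_mono {σ μ : PAssign} (h1 : σ.dom ⊆ μ.dom)
    (h2 : ∀ x ∈ σ.dom, μ.val x = σ.val x) {C : Clause} (h : SatClause σ C) :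
    SatClause μ C := by
  rcases h with ht | ⟨l, hl, hd, hv⟩
  · exact Or.inl ht
  · exact Or.inr ⟨l, hl, h1 hd, by rw [litVal_congr (h2 _ hd)]; exact hv⟩

lemma sat_mono {σ μ : PAssign} (h1 : σ.dom ⊆ μ.dom)
    (h2 : ∀ x ∈ σ.dom, μ.val x = σ.val x) {φ : CNF} (h : Satisfies σ φ) :
    Satisfies μ φ := fun C hC => satClause_mono h1 h2 (h C hC)

lemma mem_reduct {φ : CNF} {τ : PAssign} {C' : Clause} :
    C' ∈ reduct φ τ ↔ ∃ C ∈ φ, ¬ SatClause τ C ∧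
      C' = C.filter (fun l => ¬ (l.1 ∈ τ.dom ∧ litVal τ l = false)) := by
  classical
  simp only [reduct, Finset.mem_image, Finset.mem_filter]
  constructor
  · rintro ⟨C, ⟨hC, hns⟩, rfl⟩
    exact ⟨C, hC, hns, by congr⟩
  · rintro ⟨C, hC, hns, rfl⟩
    exact ⟨C, ⟨hC, hns⟩, by congr⟩

lemma satisfies_unitCNF {σ : PAssign} {X : Finset Var} :
    Satisfies σ (unitCNF X) ↔ ∀ x ∈ X, x ∈ σ.dom ∧ σ.val x = true := by
  constructor
  · intro h x hx
    have hc : ({(x, true)} : Clause) ∈ unitCNF X :=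
      Finset.mem_image.2 ⟨x, hx, rfl⟩
    rcases h _ hc with ⟨y, h1, h2⟩ | ⟨l, hl, hd, hv⟩
    · simp at h2
    · simp only [Finset.mem_singleton] at hl
      subst hl
      exact ⟨hd, by simpa [litVal] using hv⟩
  · intro h C hC
    simp only [unitCNF, Finset.mem_image] at hC
    obtain ⟨x, hx, rfl⟩ := hC
    obtain ⟨hd, hv⟩ := h x hx
    exact Or.inr ⟨(x, true), by simp, hd, by simpa [litVal] using hv⟩

lemma cnfVars_unitCNF (X : Finset Var) : cnfVars (unitCNF X) = X := by
  ext x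
  simp [cnfVars, unitCNF, clauseVars]

lemma cnfVars_union (φ ψ : CNF) : cnfVars (φ ∪ ψ) = cnfVars φ ∪ cnfVars ψ := by
  ext x; simp [cnfVars, Finset.mem_biUnion, Finset.mem_union]
  constructor
  · rintro ⟨C, hC | hC, h⟩
    · exact Or.inl ⟨C, hC, h⟩
    · exact Or.inr ⟨C, hC, h⟩
  · rintro (⟨C, hC, h⟩ | ⟨C, hC, h⟩)
    · exact ⟨C, Or.inl hC, h⟩
    · exact ⟨C, Or.inr hC, h⟩

lemma mem_cnfVars_of {φ : CNF} {C : Clause} {l : Lit} (hC : C ∈ φ) (hl : l ∈ C) :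
    l.1 ∈ cnfVars φ := by
  have hv : l.1 ∈ clauseVars C := Finset.mem_image.2 ⟨l, hl, rfl⟩
  exact Finset.mem_biUnion.2 ⟨C, hC, hv⟩

/-- Merge an assignment τ (priority) with σ. -/
def mergePA (τ σ : PAssign) : PAssign :=
  ⟨τ.dom ∪ σ.dom, fun x => if x ∈ τ.dom then τ.val x else σ.val x⟩

lemma mergePA_agree_left (τ σ : PAssign) : ∀ x ∈ τ.dom, (mergePA τ σ).val x = τ.val x := by
  intro x hx; simp [mergePA, hx]

lemma sat_of_sat_reduct {φ : CNF} {τ σ : PAssign}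
    (h : Satisfies σ (reduct φ τ)) : Satisfies (mergePA τ σ) φ := by
  intro C hC
  by_cases hs : SatClause τ C
  · exact satClause_mono Finset.subset_union_left (mergePA_agree_left τ σ) hs
  · have hC' : C.filter (fun l => ¬ (l.1 ∈ τ.dom ∧ litVal τ l = false)) ∈ reduct φ τ :=
      mem_reduct.2 ⟨C, hC, hs, rfl⟩
    rcases h _ hC' with ⟨x, h1, h2⟩ | ⟨l, hl, hd, hv⟩
    · exact Or.inl ⟨x, (Finset.mem_filter.1 h1).1, (Finset.mem_filter.1 h2).1⟩
    · rw [Finset.mem_filter] at hl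
      obtain ⟨hlC, hcond⟩ := hl
      by_cases hb : l.1 ∈ τ.dom
      · have hvt : litVal τ l = true := by
          cases hval : litVal τ l
          · exact absurd ⟨hb, hval⟩ hcond
          · rfl
        refine Or.inr ⟨l, hlC, Finset.mem_union_left _ hb, ?_⟩
        rw [litVal_congr (show (mergePA τ σ).val l.1 = τ.val l.1 by simp [mergePA, hb])]
        exact hvt
      · refine Or.inr ⟨l, hlC, Finset.mem_union_right _ hd, ?_⟩
        rw [litVal_congr (show (mergePA τ σ).val l.1 = σ.val l.1 by simp [mergePA, hb])]
        exact hv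

lemma sat_reduct_of_sat {φ : CNF} {τ μ : PAssign}
    (hag : ∀ x ∈ τ.dom, μ.val x = τ.val x) (h : Satisfies μ φ) :
    Satisfies μ (reduct φ τ) := by
  intro C' hC'
  rcases mem_reduct.1 hC' with ⟨C, hC, hns, rfl⟩
  rcases h C hC with ht | ⟨l, hl, hd, hv⟩
  · exact absurd (Or.inl ht) hns
  · have hnb : ¬ (l.1 ∈ τ.dom ∧ litVal τ l = false) := by
      rintro ⟨h1, h2⟩
      have := litVal_congr (σ := τ) (μ := μ) (hag _ h1)
      rw [hv, h2] at this
      exact Bool.noConfusion this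
    exact Or.inr ⟨l, Finset.mem_filter.2 ⟨hl, hnb⟩, hd, hv⟩

end Helpers

lemma merge_sat_unit {τ σ : PAssign} {B S : Finset Var} (hτd : τ.dom = B)
    (hτS : ∀ s ∈ S, s ∈ B → τ.val s = true) (hσS : Satisfies σ (unitCNF S)) :
    Satisfies (mergePA τ σ) (unitCNF S) := by
  rw [satisfies_unitCNF]
  intro s hs
  obtain ⟨hd, hv⟩ := satisfies_unitCNF.1 hσS s hs
  refine ⟨Finset.mem_union_right _ hd, ?_⟩
  by_cases hb : s ∈ τ.dom
  · simpa [mergePA, hb] using hτS s hs (hτd ▸ hb)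
  · simpa [mergePA, hb] using hv

/-- Lemma 1: S is a solution to P = ⟨V,H,M,T⟩ iff (i) some τ ∈ 2^{B,S} makes
T[τ] ∪ S consistent, and (ii) every τ ∈ 2^{B,S} satisfies T[τ] ∪ S ⊨ M[τ]. -/
theorem stmt_0 (P : AbdInst) (S : Finset Var) (B : Finset Var)
    (hS : S ⊆ P.H) (hB : B ⊆ P.V) :
    Solution P S ↔
      ((∃ τ : PAssign, InTA τ B S ∧ Consistent (reduct P.T τ ∪ unitCNF S)) ∧
       (∀ τ : PAssign, InTA τ B S →
          Entails (reduct P.T τ ∪ unitCNF S) (reduct (unitCNF P.M) τ))) := by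
  constructor
  · rintro ⟨hSH, ⟨σ, hσ⟩, hent⟩
    have hσT : Satisfies σ P.T := fun C hC => hσ C (Finset.mem_union_left _ hC)
    have hσS : Satisfies σ (unitCNF S) := fun C hC => hσ C (Finset.mem_union_right _ hC)
    have hσS' := satisfies_unitCNF.1 hσS
    constructor
    · -- existence of τ with consistent reduct
      refine ⟨⟨B, fun x => if x ∈ σ.dom then σ.val x else true⟩, ?_, ?_⟩
      · refine ⟨rfl, fun s hs hsB => ?_⟩
        obtain ⟨hd, hv⟩ := hσS' s hs
        simp [hd, hv]
      · set τ : PAssign := ⟨B, fun x => if x ∈ σ.dom then σ.val x else true⟩ with hτdef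
        set μ : PAssign := ⟨σ.dom ∪ B, fun x => if x ∈ σ.dom then σ.val x else true⟩ with hμdef
        have hext : Satisfies μ (P.T ∪ unitCNF S) :=
          sat_mono Finset.subset_union_left (fun x hx => by simp [hμdef, hx]) hσ
        have hag : ∀ x ∈ τ.dom, μ.val x = τ.val x := fun x _ => rfl
        refine ⟨μ, fun C hC => ?_⟩
        rcases Finset.mem_union.1 hC with h | h
        · exact sat_reduct_of_sat hag
            (fun C hC => hext C (Finset.mem_union_left _ hC)) _ h
        · exact hext C (Finset.mem_union_right _ h)
    · -- entailment on reducts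
      intro τ hτ σ' hσ'm hvars
      obtain ⟨hτd, hτS⟩ := hτ
      obtain ⟨hσ'sat, hσ'dom⟩ := hσ'm
      have hσ'T : Satisfies σ' (reduct P.T τ) :=
        fun C hC => hσ'sat C (Finset.mem_union_left _ hC)
      have hσ'S : Satisfies σ' (unitCNF S) :=
        fun C hC => hσ'sat C (Finset.mem_union_right _ hC)
      have hμT : Satisfies (mergePA τ σ') P.T := sat_of_sat_reduct hσ'T
      have hμS : Satisfies (mergePA τ σ') (unitCNF S) := merge_sat_unit hτd hτS hσ'S
      set μ' : PAssign := ⟨(mergePA τ σ').dom ∪ cnfVars (P.T ∪ unitCNF S) ∪ P.M,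
        (mergePA τ σ').val⟩ with hμ'def
      have hμ'sat : Satisfies μ' (P.T ∪ unitCNF S) := by
        refine sat_mono (σ := mergePA τ σ') (μ := μ') ?_ (fun x _ => rfl) (fun C hC => ?_)
        · intro x hx; exact Finset.mem_union_left _ (Finset.mem_union_left _ hx)
        · rcases Finset.mem_union.1 hC with h | h
          exacts [hμT C h, hμS C h]
      have hmod : IsModel μ' (P.T ∪ unitCNF S) :=
        ⟨hμ'sat, fun x hx => Finset.mem_union_left _ (Finset.mem_union_right _ hx)⟩
      have hMsub : cnfVars (unitCNF P.M) ⊆ μ'.dom := by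
        rw [cnfVars_unitCNF]
        exact fun x hx => Finset.mem_union_right _ hx
      have hMval := satisfies_unitCNF.1 (hent μ' hmod hMsub).1
      refine ⟨?_, hvars⟩
      intro C' hC'
      rcases mem_reduct.1 hC' with ⟨C, hC, hns, rfl⟩
      obtain ⟨m, hm, rfl⟩ := Finset.mem_image.1 hC
      obtain ⟨hmd, hmv⟩ := hMval m hm
      by_cases hb : m ∈ τ.dom
      · have hτm : τ.val m = true := by
          have : μ'.val m = τ.val m := by simp [hμ'def, mergePA, hb]
          rw [← this]; exact hmv
        exact absurd (Or.inr ⟨(m, true), Finset.mem_singleton_self _, hb,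
          by simpa [litVal] using hτm⟩) hns
      · have hlmem : ((m, true) : Lit) ∈
            ({((m : Var), true)} : Clause).filter
              (fun l => ¬ (l.1 ∈ τ.dom ∧ litVal τ l = false)) :=
          Finset.mem_filter.2 ⟨Finset.mem_singleton_self _, by rintro ⟨h1, _⟩; exact hb h1⟩
        have hmσ : m ∈ σ'.dom := hvars (mem_cnfVars_of hC' hlmem)
        have hσ'm : σ'.val m = true := by
          have : μ'.val m = σ'.val m := by simp [hμ'def, mergePA, hb]
          rw [← this]; exact hmv
        exact Or.inr ⟨(m, true), hlmem, hmσ, by simpa [litVal] using hσ'm⟩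
  · rintro ⟨⟨τ, ⟨hτd, hτS⟩, σ, hσ⟩, hent⟩
    have hσR : Satisfies σ (reduct P.T τ) := fun C hC => hσ C (Finset.mem_union_left _ hC)
    have hσS : Satisfies σ (unitCNF S) := fun C hC => hσ C (Finset.mem_union_right _ hC)
    refine ⟨hS, ?_, ?_⟩
    · -- consistency of T ∪ S
      refine ⟨mergePA τ σ, fun C hC => ?_⟩
      rcases Finset.mem_union.1 hC with h | h
      · exact sat_of_sat_reduct hσR C h
      · exact merge_sat_unit hτd hτS hσS C h
    · -- entailment T ∪ S ⊨ M
      intro ρ hρm hMdom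
      obtain ⟨hρsat, hρdom⟩ := hρm
      have hρS := satisfies_unitCNF.1
        (fun C hC => hρsat C (Finset.mem_union_right _ hC) : Satisfies ρ (unitCNF S))
      rw [cnfVars_unitCNF] at hMdom
      set τ' : PAssign := ⟨B, fun x => if x ∈ ρ.dom then ρ.val x else true⟩ with hτ'def
      have hIn : InTA τ' B S := by
        refine ⟨rfl, fun s hs hsB => ?_⟩
        obtain ⟨hd, hv⟩ := hρS s hs
        simp [hτ'def, hd, hv]
      have hE := hent τ' hIn
      set σ' : PAssign := ⟨ρ.dom ∪ B ∪ cnfVars (reduct P.T τ') ∪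
          cnfVars (reduct (unitCNF P.M) τ'),
        fun x => if x ∈ ρ.dom then ρ.val x else true⟩ with hσ'def
      have hρsub : ρ.dom ⊆ σ'.dom := fun x hx =>
        Finset.mem_union_left _ (Finset.mem_union_left _ (Finset.mem_union_left _ hx))
      have hσ'ext : Satisfies σ' (P.T ∪ unitCNF S) :=
        sat_mono hρsub (fun x hx => by simp [hσ'def, hx]) hρsat
      have hag : ∀ x ∈ τ'.dom, σ'.val x = τ'.val x := fun x _ => rfl
      have hσ'R : Satisfies σ' (reduct P.T τ') :=
        sat_reduct_of_sat hag (fun C hC => hσ'ext C (Finset.mem_union_left _ hC))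
      have hσ'mod : IsModel σ' (reduct P.T τ' ∪ unitCNF S) := by
        constructor
        · intro C hC
          rcases Finset.mem_union.1 hC with h | h
          · exact hσ'R C h
          · exact hσ'ext C (Finset.mem_union_right _ h)
        · rw [cnfVars_union, cnfVars_unitCNF]
          intro x hx
          rcases Finset.mem_union.1 hx with h | h
          · exact Finset.mem_union_left _ (Finset.mem_union_right _ h)
          · exact hρsub (hρS x h).1
      have hredM : cnfVars (reduct (unitCNF P.M) τ') ⊆ σ'.dom :=
        fun x hx => Finset.mem_union_right _ hx
      have hMred := hE σ' hσ'mod hredM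
      refine ⟨?_, by rwa [cnfVars_unitCNF]⟩
      rw [satisfies_unitCNF]
      intro m hm
      have hmρ : m ∈ ρ.dom := hMdom hm
      refine ⟨hmρ, ?_⟩
      have hτ'm : τ'.val m = ρ.val m := by simp [hτ'def, hmρ]
      have hCmem : ({((m : Var), true)} : Clause) ∈ unitCNF P.M :=
        Finset.mem_image.2 ⟨m, hm, rfl⟩
      by_cases hb : m ∈ B
      · cases hv : τ'.val m with
        | true => rw [hτ'm] at hv; exact hv
        | false =>
          -- the reduct contains the empty clause, contradiction
          exfalso
          have hns : ¬ SatClause τ' ({((m : Var), true)} : Clause) := by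
            rintro (⟨x, h1, h2⟩ | ⟨l, hl, hd, hlv⟩)
            · simp at h2
            · simp only [Finset.mem_singleton] at hl
              subst hl
              have h2 : τ'.val m = true := hlv
              rw [hv] at h2
              exact Bool.noConfusion h2
          have hfe : ({((m : Var), true)} : Clause).filter
              (fun l => ¬ (l.1 ∈ τ'.dom ∧ litVal τ' l = false)) = (∅ : Clause) := by
            apply Finset.filter_false_of_mem
            intro l hl
            simp only [Finset.mem_singleton] at hl
            subst hl
            simp only [not_not]
            exact ⟨hb, hv⟩
          have hemem : (∅ : Clause) ∈ reduct (unitCNF P.M) τ' :=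
            mem_reduct.2 ⟨_, hCmem, hns, hfe.symm⟩
          rcases hMred.1 _ hemem with ⟨x, h1, _⟩ | ⟨l, hl, _, _⟩
          · exact absurd h1 (Finset.notMem_empty _)
          · exact absurd hl (Finset.notMem_empty _)
      · have hns : ¬ SatClause τ' ({((m : Var), true)} : Clause) := by
          rintro (⟨x, h1, h2⟩ | ⟨l, hl, hd, hlv⟩)
          · simp at h2
          · simp only [Finset.mem_singleton] at hl
            subst hl
            exact hb hd
        have hfe : ({((m : Var), true)} : Clause).filter
            (fun l => ¬ (l.1 ∈ τ'.dom ∧ litVal τ' l = false)) =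
            ({((m : Var), true)} : Clause) := by
          apply Finset.filter_true_of_mem
          intro l hl
          simp only [Finset.mem_singleton] at hl
          subst hl
          rintro ⟨h1, _⟩
          exact hb h1
        have hmem : ({((m : Var), true)} : Clause) ∈ reduct (unitCNF P.M) τ' :=
          mem_reduct.2 ⟨_, hCmem, hns, hfe.symm⟩
        rcases hMred.1 _ hmem with ⟨x, h1, h2⟩ | ⟨l, hl, hd, hlv⟩
        · simp at h2
        · simp only [Finset.mem_singleton] at hl
          subst hl
          have h3 : σ'.val m = true := hlv
          simpa [hσ'def, hmρ] using h3
end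

section
/- Let T be a Krom formula, let S be a finite set of variables such that T ∪ S is consistent, and let m be a variable. Then T ∪ S ⊨ {{m}} if and only if T ⊨ {{m}} or there exists h ∈ S such that T ∪ {h} ⊨ {{m}}. -/
/-! Auxiliary lemmas for stmt_8 -/

/-- Majority of three booleans. -/
def maj (a b c : Bool) : Bool := (a && b) || (a && c) || (b && c)

lemma maj_not (a b c : Bool) : maj (!a) (!b) (!c) = !(maj a b c) := by
  cases a <;> cases b <;> cases c <;> rfl

lemma maj_tt (x : Bool) : maj true true x = true := by cases x <;> rfl
lemma maj_tft (x : Bool) : maj true x true = true := by cases x <;> rfl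
lemma maj_ftt (x : Bool) : maj x true true = true := by cases x <;> rfl
lemma maj_ff (x : Bool) : maj false false x = false := by cases x <;> rfl

/-- Median (pointwise majority) of three assignments; domain of the first. -/
def med (τ1 τ2 τ3 : PAssign) : PAssign :=
  ⟨τ1.dom, fun x => maj (τ1.val x) (τ2.val x) (τ3.val x)⟩

lemma litVal_med (τ1 τ2 τ3 : PAssign) (l : Lit) :
    litVal (med τ1 τ2 τ3) l = maj (litVal τ1 l) (litVal τ2 l) (litVal τ3 l) := by
  cases l with
  | mk x b => cases b <;> simp [litVal, med, maj_not]

lemma satClause_med {C : Clause} {τ1 τ2 τ3 : PAssign}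
    (hd2 : τ2.dom = τ1.dom) (hC : C.card ≤ 2)
    (h1 : SatClause τ1 C) (h2 : SatClause τ2 C) (h3 : SatClause τ3 C) :
    SatClause (med τ1 τ2 τ3) C := by
  rcases h1 with ht | ⟨l1, hl1, hd1, hv1⟩
  · exact Or.inl ht
  rcases h2 with ht | ⟨l2, hl2, hd2', hv2⟩
  · exact Or.inl ht
  rcases h3 with ht | ⟨l3, hl3, hd3', hv3⟩
  · exact Or.inl ht
  have key : l1 = l2 ∨ l1 = l3 ∨ l2 = l3 := by
    by_contra hne
    push_neg at hne
    have hsub : ({l1, l2, l3} : Finset Lit) ⊆ C := by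
      intro x hx
      simp only [Finset.mem_insert, Finset.mem_singleton] at hx
      rcases hx with h | h | h <;> subst h <;> assumption
    have h3c : ({l1, l2, l3} : Finset Lit).card = 3 := by
      rw [Finset.card_insert_of_notMem (by simp [hne.1, hne.2.1]),
        Finset.card_insert_of_notMem (by simp [hne.2.2]), Finset.card_singleton]
    have := Finset.card_le_card hsub
    omega
  rcases key with h | h | h
  · subst h
    exact Or.inr ⟨l1, hl1, hd1, by rw [litVal_med, hv1, hv2]; exact maj_tt _⟩
  · subst h
    exact Or.inr ⟨l1, hl1, hd1, by rw [litVal_med, hv1, hv3]; exact maj_tft _⟩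
  · subst h
    exact Or.inr ⟨l2, hl2, hd2 ▸ hd2', by rw [litVal_med, hv2, hv3]; exact maj_ftt _⟩

/-- Change the domain of an assignment. -/
def setDom (τ : PAssign) (D : Finset Var) : PAssign := ⟨D, τ.val⟩

lemma litVal_setDom (τ : PAssign) (D : Finset Var) (l : Lit) :
    litVal (setDom τ D) l = litVal τ l := rfl

lemma satisfies_setDom {τ : PAssign} {φ : CNF} {D : Finset Var}
    (hD : cnfVars φ ⊆ D) (h : Satisfies τ φ) : Satisfies (setDom τ D) φ := by
  intro C hC
  rcases h C hC with ht | ⟨l, hl, _, hv⟩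
  · exact Or.inl ht
  · refine Or.inr ⟨l, hl, ?_, hv⟩
    exact hD (Finset.mem_biUnion.2 ⟨C, hC, Finset.mem_image.2 ⟨l, hl, rfl⟩⟩)

lemma cnfVars_mono {φ ψ : CNF} (h : φ ⊆ ψ) : cnfVars φ ⊆ cnfVars ψ :=
  Finset.biUnion_subset_biUnion_of_subset_left _ h

lemma entails_mono {φ ψ χ : CNF} (hsub : φ ⊆ ψ) (h : Entails φ χ) : Entails ψ χ := by
  intro τ hM hv
  exact h τ ⟨fun C hC => hM.1 C (hsub hC), (cnfVars_mono hsub).trans hM.2⟩ hv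

lemma unitCNF_mono {X Y : Finset Var} (h : X ⊆ Y) : unitCNF X ⊆ unitCNF Y :=
  Finset.image_subset_image h

lemma not_taut_unit (x : Var) : ¬ Tautological ({(x, true)} : Clause) := by
  rintro ⟨y, hy1, hy2⟩
  simp at hy2

lemma satClause_unit_iff (τ : PAssign) (x : Var) :
    SatClause τ ({(x, true)} : Clause) ↔ x ∈ τ.dom ∧ τ.val x = true := by
  constructor
  · rintro (ht | ⟨l, hl, hd, hv⟩)
    · exact absurd ht (not_taut_unit x)
    · simp only [Finset.mem_singleton] at hl
      subst hl
      exact ⟨hd, by simpa [litVal] using hv⟩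
  · rintro ⟨hd, hv⟩
    exact Or.inr ⟨(x, true), Finset.mem_singleton_self _, hd, by simpa [litVal]⟩

lemma satisfies_unitCNF_iff (τ : PAssign) (X : Finset Var) :
    Satisfies τ (unitCNF X) ↔ ∀ x ∈ X, x ∈ τ.dom ∧ τ.val x = true := by
  constructor
  · intro h x hx
    exact (satClause_unit_iff τ x).1 (h _ (Finset.mem_image.2 ⟨x, hx, rfl⟩))
  · intro h C hC
    rcases Finset.mem_image.1 hC with ⟨x, hx, rfl⟩
    exact (satClause_unit_iff τ x).2 (h x hx)

lemma val_false_of_not_model {τ : PAssign} {m : Var}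
    (hd : m ∈ τ.dom) (h : ¬ IsModel τ (unitCNF {m})) : τ.val m = false := by
  by_contra hv
  apply h
  refine ⟨(satisfies_unitCNF_iff τ {m}).2 ?_, ?_⟩
  · intro x hx
    rw [Finset.mem_singleton] at hx
    subst hx
    exact ⟨hd, by simpa using hv⟩
  · rw [cnfVars_unitCNF]
    simpa using hd


/-- For a Krom formula T and finite variable set S with T ∪ S consistent:
T ∪ S ⊨ {{m}} iff T ⊨ {{m}} or T ∪ {h} ⊨ {{m}} for some h ∈ S. -/
theorem stmt_8 (T : CNF) (S : Finset Var) (m : Var)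
    (hKrom : IsKrom T) (hcon : Consistent (T ∪ unitCNF S)) :
    Entails (T ∪ unitCNF S) (unitCNF {m}) ↔
      Entails T (unitCNF {m}) ∨
        ∃ h ∈ S, Entails (T ∪ unitCNF {h}) (unitCNF {m}) := by
  constructor
  · revert hcon
    induction S using Finset.induction_on with
    | empty =>
      intro _ h
      left
      simpa [unitCNF] using h
    | @insert a S' hnotin IH =>
      intro hcon hent
      by_cases h1 : Entails (T ∪ unitCNF {a}) (unitCNF {m})
      · exact Or.inr ⟨a, Finset.mem_insert_self a S', h1⟩
      by_cases h2 : Entails (T ∪ unitCNF S') (unitCNF {m})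
      · have hsub : T ∪ unitCNF S' ⊆ T ∪ unitCNF (insert a S') :=
          Finset.union_subset_union_right (unitCNF_mono (Finset.subset_insert a S'))
        have hconS' : Consistent (T ∪ unitCNF S') := by
          obtain ⟨τ, hτ⟩ := hcon
          exact ⟨τ, fun C hC => hτ C (hsub hC)⟩
        rcases IH hconS' h2 with h | ⟨h', hh', hent'⟩
        · exact Or.inl h
        · exact Or.inr ⟨h', Finset.mem_insert_of_mem hh', hent'⟩
      exfalso
      rw [Entails] at h1 h2
      push_neg at h1 h2
      obtain ⟨σ1, hσ1, hσ1d, hσ1m⟩ := h1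
      obtain ⟨σ2, hσ2, hσ2d, hσ2m⟩ := h2
      obtain ⟨σ3, hσ3⟩ := hcon
      set D : Finset Var := cnfVars (T ∪ unitCNF (insert a S')) ∪ {m} with hD
      have hTD : cnfVars T ⊆ D :=
        (cnfVars_mono Finset.subset_union_left).trans Finset.subset_union_left
      have hUD : cnfVars (unitCNF (insert a S')) ⊆ D :=
        (cnfVars_mono Finset.subset_union_right).trans Finset.subset_union_left
      have hmD : m ∈ D := Finset.mem_union_right _ (Finset.mem_singleton_self m)
      set τ1 := setDom σ1 D
      set τ2 := setDom σ2 D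
      set τ3 := setDom σ3 D
      -- variables m: false in σ1, σ2
      have hm1 : m ∈ σ1.dom := hσ1d (by rw [cnfVars_unitCNF]; exact Finset.mem_singleton_self m)
      have hm2 : m ∈ σ2.dom := hσ2d (by rw [cnfVars_unitCNF]; exact Finset.mem_singleton_self m)
      have hv1m : σ1.val m = false := val_false_of_not_model hm1 hσ1m
      have hv2m : σ2.val m = false := val_false_of_not_model hm2 hσ2m
      -- satisfaction of T by all three
      have hT1 : Satisfies τ1 T :=
        satisfies_setDom hTD (fun C hC => hσ1.1 C (Finset.mem_union_left _ hC))
      have hT2 : Satisfies τ2 T :=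
        satisfies_setDom hTD (fun C hC => hσ2.1 C (Finset.mem_union_left _ hC))
      have hT3 : Satisfies τ3 T :=
        satisfies_setDom hTD (fun C hC => hσ3 C (Finset.mem_union_left _ hC))
      -- unit values
      have hva : σ1.val a = true :=
        (((satisfies_unitCNF_iff σ1 {a}).1
          (fun C hC => hσ1.1 C (Finset.mem_union_right _ hC))) a (Finset.mem_singleton_self a)).2
      have hvS' : ∀ s ∈ S', σ2.val s = true := fun s hs =>
        (((satisfies_unitCNF_iff σ2 S').1
          (fun C hC => hσ2.1 C (Finset.mem_union_right _ hC))) s hs).2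
      have hv3 : ∀ s ∈ insert a S', σ3.val s = true := fun s hs =>
        (((satisfies_unitCNF_iff σ3 (insert a S')).1
          (fun C hC => hσ3 C (Finset.mem_union_right _ hC))) s hs).2
      -- the median assignment
      set μ := med τ1 τ2 τ3 with hμ
      have hμdom : μ.dom = D := rfl
      have hμval : ∀ x, μ.val x = maj (σ1.val x) (σ2.val x) (σ3.val x) := fun x => rfl
      have hμT : Satisfies μ T := fun C hC =>
        satClause_med rfl (hKrom C hC) (hT1 C hC) (hT2 C hC) (hT3 C hC)
      have hμU : Satisfies μ (unitCNF (insert a S')) := by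
        rw [satisfies_unitCNF_iff]
        intro s hs
        refine ⟨?_, ?_⟩
        · rw [hμdom]
          exact hUD (by rw [cnfVars_unitCNF]; exact hs)
        · rw [hμval]
          rcases Finset.mem_insert.1 hs with h | h
          · subst h
            rw [hva, hv3 s hs]
            exact maj_tft _
          · rw [hvS' s h, hv3 s hs]
            exact maj_ftt _
      have hμM : IsModel μ (T ∪ unitCNF (insert a S')) := by
        refine ⟨fun C hC => ?_, ?_⟩
        · rcases Finset.mem_union.1 hC with h | h
          · exact hμT C h
          · exact hμU C h
        · rw [hμdom]
          exact Finset.subset_union_left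
      have := hent μ hμM (by rw [cnfVars_unitCNF, hμdom]; simpa using hmD)
      have hμm : μ.val m = true :=
        (((satisfies_unitCNF_iff μ {m}).1 this.1) m (Finset.mem_singleton_self m)).2
      rw [hμval, hv1m, hv2m, maj_ff] at hμm
      exact Bool.false_ne_true hμm
  · rintro (h | ⟨h, hhS, hent⟩)
    · exact entails_mono Finset.subset_union_left h
    · exact entails_mono
        (Finset.union_subset_union_right (unitCNF_mono (Finset.singleton_subset_iff.2 hhS))) hent
end

section
/- Let T be a Krom formula and let S be a finite set of variables. Then T ∪ S is inconsistent if and only if T is inconsistent, or there exists h ∈ S such that T ∪ {h} is inconsistent, or there exist h₁, h₂ ∈ S such that T ∪ {h₁, h₂} is inconsistent. -/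
/-- Majority of three booleans. -/
def maj3 (a b c : Bool) : Bool := (a && b) || (a && c) || (b && c)

lemma sat_mono_formula {τ : PAssign} {φ ψ : CNF} (h : Satisfies τ φ) (hsub : ψ ⊆ φ) :
    Satisfies τ ψ := fun C hC => h C (hsub hC)

lemma consistent_mono {φ ψ : CNF} (h : Consistent φ) (hsub : ψ ⊆ φ) : Consistent ψ := by
  obtain ⟨τ, hτ⟩ := h; exact ⟨τ, sat_mono_formula hτ hsub⟩

lemma sat_mono_dom {D₁ D₂ : Finset Var} {v : Var → Bool} {φ : CNF}
    (h : Satisfies ⟨D₁, v⟩ φ) (hsub : D₁ ⊆ D₂) : Satisfies ⟨D₂, v⟩ φ := by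
  intro C hC
  rcases h C hC with ht | ⟨l, hl, hd, hv⟩
  · exact Or.inl ht
  · exact Or.inr ⟨l, hl, hsub hd, hv⟩

lemma maj_lit {v1 v2 v3 : Var → Bool} {D : Finset Var} {l : Lit}
    (h : (litVal ⟨D, v1⟩ l = true ∧ litVal ⟨D, v2⟩ l = true) ∨
         (litVal ⟨D, v1⟩ l = true ∧ litVal ⟨D, v3⟩ l = true) ∨
         (litVal ⟨D, v2⟩ l = true ∧ litVal ⟨D, v3⟩ l = true)) :
    litVal ⟨D, fun x => maj3 (v1 x) (v2 x) (v3 x)⟩ l = true := by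
  obtain ⟨x, b⟩ := l
  revert h
  cases b <;> simp only [litVal, maj3] <;>
    cases v1 x <;> cases v2 x <;> cases v3 x <;> simp

lemma maj_sat {v1 v2 v3 : Var → Bool} {D : Finset Var} {C : Clause} (hcard : C.card ≤ 2)
    (h1 : SatClause ⟨D, v1⟩ C) (h2 : SatClause ⟨D, v2⟩ C) (h3 : SatClause ⟨D, v3⟩ C) :
    SatClause ⟨D, fun x => maj3 (v1 x) (v2 x) (v3 x)⟩ C := by
  rcases h1 with ht | ⟨l1, hl1, hd1, hv1⟩
  · exact Or.inl ht
  rcases h2 with ht | ⟨l2, hl2, hd2, hv2⟩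
  · exact Or.inl ht
  rcases h3 with ht | ⟨l3, hl3, hd3, hv3⟩
  · exact Or.inl ht
  by_cases h12 : l1 = l2
  · subst h12
    exact Or.inr ⟨l1, hl1, hd1, maj_lit (Or.inl ⟨hv1, hv2⟩)⟩
  by_cases h13 : l1 = l3
  · subst h13
    exact Or.inr ⟨l1, hl1, hd1, maj_lit (Or.inr (Or.inl ⟨hv1, hv3⟩))⟩
  by_cases h23 : l2 = l3
  · subst h23
    exact Or.inr ⟨l2, hl2, hd2, maj_lit (Or.inr (Or.inr ⟨hv2, hv3⟩))⟩
  exfalso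
  have hsub : ({l1, l2, l3} : Finset Lit) ⊆ C := by
    intro x hx
    simp only [Finset.mem_insert, Finset.mem_singleton] at hx
    rcases hx with rfl | rfl | rfl <;> assumption
  have hc3 : ({l1, l2, l3} : Finset Lit).card = 3 := by
    rw [Finset.card_insert_of_notMem (by simp [h12, h13]),
      Finset.card_insert_of_notMem (by simp [h23]), Finset.card_singleton]
  have := Finset.card_le_card hsub
  omega

lemma sat_unit {τ : PAssign} {S' : Finset Var} {T : CNF}
    (h : Satisfies τ (T ∪ unitCNF S')) {s : Var} (hs : s ∈ S') :
    s ∈ τ.dom ∧ litVal τ (s, true) = true := by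
  have hmem : ({(s, true)} : Clause) ∈ T ∪ unitCNF S' := by
    refine Finset.mem_union_right _ ?_
    exact Finset.mem_image.mpr ⟨s, hs, rfl⟩
  rcases h _ hmem with ⟨x, hx1, hx2⟩ | ⟨l, hl, hd, hv⟩
  · simp only [Finset.mem_singleton, Prod.mk.injEq] at hx2
    exact absurd hx2.2 (by simp)
  · simp only [Finset.mem_singleton] at hl
    subst hl
    exact ⟨hd, hv⟩

lemma krom_key (T : CNF) (hKrom : IsKrom T) :
    ∀ n (S : Finset Var), S.card ≤ n → Consistent T →
      (∀ h₁ ∈ S, ∀ h₂ ∈ S, Consistent (T ∪ unitCNF ({h₁, h₂} : Finset Var))) →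
      Consistent (T ∪ unitCNF S) := by
  intro n
  induction n with
  | zero =>
    intro S hS hT _
    have : S = ∅ := Finset.card_eq_zero.mp (Nat.le_zero.mp hS)
    subst this
    simpa [unitCNF] using hT
  | succ n ih =>
    intro S hS hT hpair
    by_cases hsmall : S.card ≤ 2
    · rcases Finset.eq_empty_or_nonempty S with rfl | ⟨a, ha⟩
      · simpa [unitCNF] using hT
      rcases Finset.eq_empty_or_nonempty (S.erase a) with he | ⟨b, hb⟩
      · -- S = {a}
        have hSa : S ⊆ ({a, a} : Finset Var) := by
          intro x hx
          simp only [Finset.mem_insert, Finset.mem_singleton]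
          by_contra hxa
          push_neg at hxa
          exact (Finset.notMem_empty x) (he ▸ Finset.mem_erase.mpr ⟨hxa.1, hx⟩)
        exact consistent_mono (hpair a ha a ha)
          (Finset.union_subset_union_right (unitCNF_mono hSa))
      · have hbS : b ∈ S := (Finset.mem_erase.mp hb).2
        have hba : b ≠ a := (Finset.mem_erase.mp hb).1
        have hSab : S ⊆ ({a, b} : Finset Var) := by
          intro x hx
          simp only [Finset.mem_insert, Finset.mem_singleton]
          by_contra hc
          push_neg at hc
          have hsub : ({x, a, b} : Finset Var) ⊆ S := by
            intro y hy
            simp only [Finset.mem_insert, Finset.mem_singleton] at hy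
            rcases hy with rfl | rfl | rfl <;> assumption
          have hc3 : ({x, a, b} : Finset Var).card = 3 := by
            rw [Finset.card_insert_of_notMem
                (by simp only [Finset.mem_insert, Finset.mem_singleton]; push_neg; exact hc),
              Finset.card_insert_of_notMem
                (by simp only [Finset.mem_singleton]; exact fun h => hba h.symm),
              Finset.card_singleton]
          have := Finset.card_le_card hsub
          omega
        exact consistent_mono (hpair a ha b hbS)
          (Finset.union_subset_union_right (unitCNF_mono hSab))
    · -- S.card ≥ 3: pick three distinct elements
      push_neg at hsmall
      obtain ⟨a, ha⟩ := Finset.card_pos.mp (show 0 < S.card by omega)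
      have hea : (S.erase a).card = S.card - 1 := Finset.card_erase_of_mem ha
      obtain ⟨b, hb⟩ := Finset.card_pos.mp (show 0 < (S.erase a).card by omega)
      have heb : ((S.erase a).erase b).card = (S.erase a).card - 1 :=
        Finset.card_erase_of_mem hb
      obtain ⟨c, hc⟩ := Finset.card_pos.mp (show 0 < ((S.erase a).erase b).card by omega)
      have hbS : b ∈ S := (Finset.mem_erase.mp hb).2
      have hba : b ≠ a := (Finset.mem_erase.mp hb).1
      have hcb : c ≠ b := (Finset.mem_erase.mp hc).1
      have hc' : c ∈ S.erase a := (Finset.mem_erase.mp hc).2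
      have hca : c ≠ a := (Finset.mem_erase.mp hc').1
      have hcS : c ∈ S := (Finset.mem_erase.mp hc').2
      -- apply ih to the three erased sets
      have key : ∀ x ∈ S, Consistent (T ∪ unitCNF (S.erase x)) := by
        intro x hx
        refine ih (S.erase x) (by rw [Finset.card_erase_of_mem hx]; omega) hT ?_
        intro h₁ h₁m h₂ h₂m
        exact hpair h₁ (Finset.mem_of_mem_erase h₁m) h₂ (Finset.mem_of_mem_erase h₂m)
      obtain ⟨τ1, hτ1⟩ := key a ha
      obtain ⟨τ2, hτ2⟩ := key b hbS
      obtain ⟨τ3, hτ3⟩ := key c hcS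
      set D : Finset Var := τ1.dom ∪ τ2.dom ∪ τ3.dom with hD
      have hτ1' : Satisfies ⟨D, τ1.val⟩ (T ∪ unitCNF (S.erase a)) :=
        sat_mono_dom hτ1 (by intro x hx; simp [hD, hx])
      have hτ2' : Satisfies ⟨D, τ2.val⟩ (T ∪ unitCNF (S.erase b)) :=
        sat_mono_dom hτ2 (by intro x hx; simp [hD, hx])
      have hτ3' : Satisfies ⟨D, τ3.val⟩ (T ∪ unitCNF (S.erase c)) :=
        sat_mono_dom hτ3 (by intro x hx; simp [hD, hx])
      refine ⟨⟨D, fun x => maj3 (τ1.val x) (τ2.val x) (τ3.val x)⟩, ?_⟩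
      intro C hC
      rcases Finset.mem_union.mp hC with hCT | hCS
      · have hsub : ∀ X : Finset Var, T ⊆ T ∪ unitCNF X := fun X => Finset.subset_union_left
        exact maj_sat (hKrom C hCT)
          (sat_mono_formula hτ1' (hsub _) C hCT)
          (sat_mono_formula hτ2' (hsub _) C hCT)
          (sat_mono_formula hτ3' (hsub _) C hCT)
      · obtain ⟨s, hsS, rfl⟩ := Finset.mem_image.mp hCS
        -- s differs from at least two of a, b, c
        have hlit : s ∈ D ∧
            litVal ⟨D, fun x => maj3 (τ1.val x) (τ2.val x) (τ3.val x)⟩ (s, true) = true := by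
          by_cases hsa : s = a
          · subst hsa
            have h2 := sat_unit hτ2' (Finset.mem_erase.mpr ⟨fun h => hba h.symm, hsS⟩)
            have h3 := sat_unit hτ3' (Finset.mem_erase.mpr ⟨fun h => hca h.symm, hsS⟩)
            exact ⟨h2.1, maj_lit (Or.inr (Or.inr ⟨h2.2, h3.2⟩))⟩
          · by_cases hsb : s = b
            · subst hsb
              have h1 := sat_unit hτ1' (Finset.mem_erase.mpr ⟨hba, hsS⟩)
              have h3 := sat_unit hτ3' (Finset.mem_erase.mpr ⟨fun h => hcb h.symm, hsS⟩)
              exact ⟨h1.1, maj_lit (Or.inr (Or.inl ⟨h1.2, h3.2⟩))⟩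
            · have h1 := sat_unit hτ1' (Finset.mem_erase.mpr ⟨hsa, hsS⟩)
              have h2 := sat_unit hτ2' (Finset.mem_erase.mpr ⟨hsb, hsS⟩)
              exact ⟨h1.1, maj_lit (Or.inl ⟨h1.2, h2.2⟩)⟩
        exact Or.inr ⟨(s, true), Finset.mem_singleton_self _, hlit.1, hlit.2⟩

/-- For a Krom formula T and a finite set S of variables: T ∪ S is inconsistent iff
T is inconsistent, or T ∪ {h} is inconsistent for some h ∈ S, or T ∪ {h₁,h₂} is
inconsistent for some h₁,h₂ ∈ S. -/
theorem stmt_10 (T : CNF) (S : Finset Var) (hKrom : IsKrom T) :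
    ¬ Consistent (T ∪ unitCNF S) ↔
      (¬ Consistent T ∨
       (∃ h ∈ S, ¬ Consistent (T ∪ unitCNF {h})) ∨
       (∃ h₁ ∈ S, ∃ h₂ ∈ S, ¬ Consistent (T ∪ unitCNF {h₁, h₂}))) := by
  constructor
  · intro hinc
    by_contra hcon
    push_neg at hcon
    obtain ⟨hT, hone, hpair⟩ := hcon
    exact hinc (krom_key T hKrom S.card S le_rfl hT
      (fun h₁ h₁m h₂ h₂m => hpair h₁ h₁m h₂ h₂m))
  · rintro (hT | ⟨h, hS, hh⟩ | ⟨h₁, h₁S, h₂, h₂S, hh⟩) hcon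
    · exact hT (consistent_mono hcon Finset.subset_union_left)
    · refine hh (consistent_mono hcon (Finset.union_subset_union_right (unitCNF_mono ?_)))
      simpa using hS
    · refine hh (consistent_mono hcon (Finset.union_subset_union_right (unitCNF_mono ?_)))
      intro x hx
      simp only [Finset.mem_insert, Finset.mem_singleton] at hx
      rcases hx with rfl | rfl <;> assumption
end
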